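/- Hoffman–Wielandt inequality: if A and B are n×n real symmetric matrices with eigenvalues λ_1(A) ≥ ... ≥ λ_n(A) and λ_1(B) ≥ ... ≥ λ_n(B), then ∑_{i=1}^n (λ_i(A) − λ_i(B))² ≤ Tr((A−B)²). -/
import Mathlib

open Matrix Finset

lemma hw_trace_aux (n : ℕ) (a b : Fin n → ℝ) (U V : Matrix (Fin n) (Fin n) ℝ) :
    Matrix.trace ((U * Matrix.diagonal a * star U) * (V * Matrix.diagonal b * star V)) =
      ∑ i, ∑ j, a i * b j * ((star U * V) i j) ^ 2 := by
  have key : (U * Matrix.diagonal a * star U) * (V * Matrix.diagonal b * star V)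
      = U * (Matrix.diagonal a * star U * V * Matrix.diagonal b) * star V := by
    simp only [Matrix.mul_assoc]
  rw [key, Matrix.trace_mul_cycle]
  have key2 : star V * U * (Matrix.diagonal a * star U * V * Matrix.diagonal b)
      = star (star U * V) * Matrix.diagonal a * (star U * V) * Matrix.diagonal b := by
    simp only [StarMul.star_mul, star_star, Matrix.mul_assoc]
  rw [key2]
  generalize (star U * V : Matrix (Fin n) (Fin n) ℝ) = W
  rw [Matrix.trace]
  simp only [Matrix.diag_apply, Matrix.mul_apply, Matrix.diagonal_apply, Matrix.star_apply,
    star_trivial, ite_mul, mul_ite, zero_mul, mul_zero, Finset.sum_ite_eq, Finset.sum_ite_eq',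
    Finset.mem_univ, if_true, Finset.sum_mul, Finset.mul_sum]
  rw [Finset.sum_comm]
  refine Finset.sum_congr rfl fun i _ => Finset.sum_congr rfl fun j _ => ?_
  ring

lemma hw_sq_ds (n : ℕ) (W : Matrix (Fin n) (Fin n) ℝ)
    (h1 : star W * W = 1) (h2 : W * star W = 1) :
    Matrix.of (fun i j => (W i j) ^ 2) ∈ doublyStochastic ℝ (Fin n) := by
  rw [mem_doublyStochastic_iff_sum]
  refine ⟨fun i j => sq_nonneg _, fun i => ?_, fun j => ?_⟩
  · have := congrFun (congrFun h2 i) i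
    simp only [Matrix.mul_apply, Matrix.star_apply, star_trivial, Matrix.one_apply_eq] at this
    simpa [sq] using this
  · have := congrFun (congrFun h1 j) j
    simp only [Matrix.mul_apply, Matrix.star_apply, star_trivial, Matrix.one_apply_eq] at this
    simp only [Matrix.of_apply, sq]
    rw [← this]

lemma hw_perm_ds (n : ℕ) (M : Matrix (Fin n) (Fin n) ℝ) (hM : M ∈ doublyStochastic ℝ (Fin n))
    (e f : Equiv.Perm (Fin n)) :
    Matrix.of (fun i j => M (e i) (f j)) ∈ doublyStochastic ℝ (Fin n) := by
  rw [mem_doublyStochastic_iff_sum] at hM ⊢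
  obtain ⟨h0, hr, hc⟩ := hM
  refine ⟨fun i j => h0 _ _, fun i => ?_, fun j => ?_⟩
  · simpa using (Equiv.sum_comp f (fun j => M (e i) j)).trans (hr (e i))
  · simpa using (Equiv.sum_comp e (fun i => M i (f j))).trans (hc (f j))

lemma hw_ds_bound (n : ℕ) (S : Matrix (Fin n) (Fin n) ℝ) (hS : S ∈ doublyStochastic ℝ (Fin n))
    (f g : Fin n → ℝ) (hfg : Monovary f g) :
    ∑ i, ∑ j, f i * g j * S i j ≤ ∑ i, f i * g i := by
  obtain ⟨w, hw0, hw1, hwS⟩ := exists_eq_sum_perm_of_mem_doublyStochastic hS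
  have hterm : ∀ i j, f i * g j * S i j = ∑ σ : Equiv.Perm (Fin n),
      w σ * (f i * g j * (σ.permMatrix ℝ) i j) := by
    intro i j
    rw [← hwS]
    simp only [Finset.sum_apply, Matrix.sum_apply, Matrix.smul_apply, smul_eq_mul,
      Finset.mul_sum]
    exact Finset.sum_congr rfl fun σ _ => by ring
  calc ∑ i, ∑ j, f i * g j * S i j
      = ∑ i, ∑ j, ∑ σ : Equiv.Perm (Fin n), w σ * (f i * g j * (σ.permMatrix ℝ) i j) := by
        simp only [hterm]
    _ = ∑ i, ∑ σ : Equiv.Perm (Fin n), ∑ j, w σ * (f i * g j * (σ.permMatrix ℝ) i j) :=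
        Finset.sum_congr rfl fun i _ => Finset.sum_comm
    _ = ∑ σ : Equiv.Perm (Fin n), ∑ i, ∑ j, w σ * (f i * g j * (σ.permMatrix ℝ) i j) :=
        Finset.sum_comm
    _ = ∑ σ : Equiv.Perm (Fin n), w σ * ∑ i, f i * g (σ i) := by
        refine Finset.sum_congr rfl fun σ _ => ?_
        rw [Finset.mul_sum]
        refine Finset.sum_congr rfl fun i _ => ?_
        simp [Equiv.Perm.permMatrix, PEquiv.toMatrix_apply, Equiv.toPEquiv_apply,
          mul_ite, mul_zero, Finset.sum_ite_eq']
    _ ≤ ∑ σ : Equiv.Perm (Fin n), w σ * ∑ i, f i * g i := by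
        refine Finset.sum_le_sum fun σ _ => ?_
        exact mul_le_mul_of_nonneg_left (hfg.sum_mul_comp_perm_le_sum_mul) (hw0 σ)
    _ = ∑ i, f i * g i := by rw [← Finset.sum_mul, hw1, one_mul]

/-- Hoffman–Wielandt inequality: if A and B are n×n real symmetric matrices with
eigenvalues listed in decreasing order (with multiplicity) as λ_1(A) ≥ ... ≥ λ_n(A)
and λ_1(B) ≥ ... ≥ λ_n(B), then ∑ (λ_i(A) − λ_i(B))² ≤ Tr((A−B)²). -/
theorem hoffman_wielandt (n : ℕ) (A B : Matrix (Fin n) (Fin n) ℝ)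
    (hA : A.IsHermitian) (hB : B.IsHermitian) (lamA lamB : Fin n → ℝ)
    (hpermA : ∃ e : Equiv.Perm (Fin n), lamA = hA.eigenvalues ∘ e)
    (hpermB : ∃ e : Equiv.Perm (Fin n), lamB = hB.eigenvalues ∘ e)
    (hdecA : Antitone lamA) (hdecB : Antitone lamB) :
    ∑ i, (lamA i - lamB i) ^ 2 ≤ Matrix.trace ((A - B) * (A - B)) := by
  obtain ⟨e, hpA⟩ := hpermA
  obtain ⟨f, hpB⟩ := hpermB
  set a := hA.eigenvalues with ha
  set b := hB.eigenvalues with hb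
  set U := (hA.eigenvectorUnitary : Matrix (Fin n) (Fin n) ℝ) with hU
  set V := (hB.eigenvectorUnitary : Matrix (Fin n) (Fin n) ℝ) with hV
  have hAe : A = U * Matrix.diagonal a * star U := by
    have := hA.spectral_theorem
    simpa using this
  have hBe : B = V * Matrix.diagonal b * star V := by
    have := hB.spectral_theorem
    simpa using this
  have hUsU : star U * U = 1 := Unitary.coe_star_mul_self hA.eigenvectorUnitary
  have hUUs : U * star U = 1 := Unitary.coe_mul_star_self hA.eigenvectorUnitary
  have hVsV : star V * V = 1 := Unitary.coe_star_mul_self hB.eigenvectorUnitary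
  have hVVs : V * star V = 1 := Unitary.coe_mul_star_self hB.eigenvectorUnitary
  set W := star U * V with hWdef
  have hW1 : star W * W = 1 := by
    have : star W * W = star V * ((U * star U) * V) := by
      simp only [hWdef, StarMul.star_mul, star_star, Matrix.mul_assoc]
    rw [this, hUUs, Matrix.one_mul, hVsV]
  have hW2 : W * star W = 1 := by
    have : W * star W = star U * ((V * star V) * U) := by
      simp only [hWdef, StarMul.star_mul, star_star, Matrix.mul_assoc]
    rw [this, hVVs, Matrix.one_mul, hUsU]
  -- traces of squares
  have trA2 : Matrix.trace (A * A) = ∑ i, a i ^ 2 := by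
    rw [hAe, hw_trace_aux, ]
    simp [hUsU, Matrix.one_apply, Finset.sum_ite_eq, sq]
  have trB2 : Matrix.trace (B * B) = ∑ i, b i ^ 2 := by
    rw [hBe, hw_trace_aux]
    simp [hVsV, Matrix.one_apply, Finset.sum_ite_eq, sq]
  -- trace of mixed product
  have trAB : Matrix.trace (A * B) = ∑ i, ∑ j, a i * b j * (W i j) ^ 2 := by
    rw [hAe, hBe, hw_trace_aux]
  -- doubly stochastic matrices
  set S : Matrix (Fin n) (Fin n) ℝ := Matrix.of (fun i j => (W i j) ^ 2) with hSdef
  have hS : S ∈ doublyStochastic ℝ (Fin n) := hw_sq_ds n W hW1 hW2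
  set S' : Matrix (Fin n) (Fin n) ℝ := Matrix.of (fun i j => S (e i) (f j)) with hS'def
  have hS' : S' ∈ doublyStochastic ℝ (Fin n) := hw_perm_ds n S hS e f
  have reindex : ∑ i, ∑ j, a i * b j * (W i j) ^ 2 = ∑ i, ∑ j, lamA i * lamB j * S' i j := by
    rw [← Equiv.sum_comp e (fun i => ∑ j, a i * b j * (W i j) ^ 2)]
    refine Finset.sum_congr rfl fun i _ => ?_
    rw [← Equiv.sum_comp f (fun j => a (e i) * b j * (W (e i) j) ^ 2)]
    refine Finset.sum_congr rfl fun j _ => ?_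
    simp [hpA, hpB, hS'def, hSdef]
  have bound : Matrix.trace (A * B) ≤ ∑ i, lamA i * lamB i := by
    rw [trAB, reindex]
    exact hw_ds_bound n S' hS' lamA lamB (hdecA.monovary hdecB)
  -- sums of squares of lambdas
  have sA : ∑ i, lamA i ^ 2 = ∑ i, a i ^ 2 := by
    rw [hpA]
    exact Equiv.sum_comp e (fun i => a i ^ 2)
  have sB : ∑ i, lamB i ^ 2 = ∑ i, b i ^ 2 := by
    rw [hpB]
    exact Equiv.sum_comp f (fun i => b i ^ 2)
  -- expand both sides
  have lhs : ∑ i, (lamA i - lamB i) ^ 2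
      = ∑ i, lamA i ^ 2 - 2 * ∑ i, lamA i * lamB i + ∑ i, lamB i ^ 2 := by
    rw [Finset.mul_sum, ← Finset.sum_sub_distrib, ← Finset.sum_add_distrib]
    exact Finset.sum_congr rfl fun i _ => by ring
  have rhs : Matrix.trace ((A - B) * (A - B))
      = Matrix.trace (A * A) - 2 * Matrix.trace (A * B) + Matrix.trace (B * B) := by
    rw [sub_mul, mul_sub, mul_sub, Matrix.trace_sub, Matrix.trace_sub, Matrix.trace_sub,
      Matrix.trace_mul_comm B A]
    ring
  rw [lhs, rhs, trA2, trB2, ← sA, ← sB]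
  linarith
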